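/- Let I ⊆ ℕ be finite, Z ⊆ I, and X ⊆ [I]². Then nor_I([Z]² ∩ X) + nor_I([I ∖ Z]² ∩ X) ≥ nor_I(X) − 2. -/
import Mathlib


/-- `offDiagSq I = [I]² = (I × I) \ Δ`, the off-diagonal part of the square of `I`. -/
def offDiagSq (I : Set ℕ) : Set (ℕ × ℕ) := (I ×ˢ I) \ {p : ℕ × ℕ | p.1 = p.2}

/-- `nor X` is the least `k` such that `X` can be covered by `k` rectangles
`A i ×ˢ B i` with `A i ∩ B i = ∅`. -/
noncomputable def nor (X : Set (ℕ × ℕ)) : ℕ :=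
  sInf {k : ℕ | ∃ A B : ℕ → Set ℕ,
    (∀ i < k, A i ∩ B i = ∅) ∧ X ⊆ ⋃ i < k, A i ×ˢ B i}

lemma nor_set_nonempty (I : Set ℕ) (hI : I.Finite) (X : Set (ℕ × ℕ))
    (hX : X ⊆ offDiagSq I) :
    {k : ℕ | ∃ A B : ℕ → Set ℕ,
      (∀ i < k, A i ∩ B i = ∅) ∧ X ⊆ ⋃ i < k, A i ×ˢ B i}.Nonempty := by
  have hXf : X.Finite := (hI.prod hI).subset (fun x hx => (hX hx).1)
  set l : List (ℕ × ℕ) := hXf.toFinset.toList with hldef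
  have hmem : ∀ x, x ∈ l ↔ x ∈ X := by
    intro x
    simp [hldef, Set.Finite.mem_toFinset]
  refine ⟨l.length, fun i => {(l.getD i (0, 1)).1}, fun i => {(l.getD i (0, 1)).2}, ?_, ?_⟩
  · intro i hi
    have h1 : l.getD i (0, 1) = l[i] := List.getD_eq_getElem l _ hi
    have h2 : l[i] ∈ X := (hmem _).mp (List.getElem_mem hi)
    have hne : (l[i]'hi).1 ≠ (l[i]'hi).2 := (hX h2).2
    rw [Set.eq_empty_iff_forall_notMem]
    rintro a ⟨ha, hb⟩
    dsimp only at ha hb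
    rw [h1, Set.mem_singleton_iff] at ha hb
    exact hne (ha.symm.trans hb)
  · intro x hx
    obtain ⟨i, hi, hxi⟩ := List.mem_iff_getElem.mp ((hmem x).mpr hx)
    have h1 : l.getD i (0, 1) = l[i] := List.getD_eq_getElem l _ hi
    refine Set.mem_iUnion₂.mpr ⟨i, hi, ?_⟩
    dsimp only
    rw [h1, hxi]
    exact ⟨rfl, rfl⟩

/-- Splitting `I` into `Z` and `I \ Z` loses at most `2` from the norm. -/
theorem nor_split_ge (I : Set ℕ) (hI : I.Finite) (Z : Set ℕ) (hZ : Z ⊆ I)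
    (X : Set (ℕ × ℕ)) (hX : X ⊆ offDiagSq I) :
    nor (offDiagSq Z ∩ X) + nor (offDiagSq (I \ Z) ∩ X) ≥ nor X - 2 := by
  set P := offDiagSq Z ∩ X with hPdef
  set Q := offDiagSq (I \ Z) ∩ X with hQdef
  have hP : P ⊆ offDiagSq I := fun x hx => hX hx.2
  have hQ : Q ⊆ offDiagSq I := fun x hx => hX hx.2
  have hm1 : ∃ A B : ℕ → Set ℕ, (∀ i < nor P, A i ∩ B i = ∅) ∧
      P ⊆ ⋃ i < nor P, A i ×ˢ B i := Nat.sInf_mem (nor_set_nonempty I hI P hP)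
  have hm2 : ∃ A B : ℕ → Set ℕ, (∀ i < nor Q, A i ∩ B i = ∅) ∧
      Q ⊆ ⋃ i < nor Q, A i ×ˢ B i := Nat.sInf_mem (nor_set_nonempty I hI Q hQ)
  obtain ⟨A1, B1, hd1, hc1⟩ := hm1
  obtain ⟨A2, B2, hd2, hc2⟩ := hm2
  have key : nor X ≤ nor P + nor Q + 2 := by
    apply Nat.sInf_le
    refine ⟨fun i =>
      if i < nor P then A1 i else if i < nor P + nor Q then A2 (i - nor P)
      else if i = nor P + nor Q then Z else I \ Z,
      fun i =>
      if i < nor P then B1 i else if i < nor P + nor Q then B2 (i - nor P)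
      else if i = nor P + nor Q then I \ Z else Z, ?_, ?_⟩
    · intro i hi
      dsimp only
      split_ifs with h1 h2 h3
      · exact hd1 i h1
      · exact hd2 (i - nor P) (by omega)
      · rw [Set.eq_empty_iff_forall_notMem]
        rintro a ⟨haZ, -, haZ'⟩
        exact haZ' haZ
      · rw [Set.eq_empty_iff_forall_notMem]
        rintro a ⟨⟨-, haZ'⟩, haZ⟩
        exact haZ' haZ
    · intro x hx
      have hxI := hX hx
      have hx1 : x.1 ∈ I := hxI.1.1
      have hx2 : x.2 ∈ I := hxI.1.2
      have hne : x.1 ≠ x.2 := hxI.2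
      by_cases h1 : x.1 ∈ Z <;> by_cases h2 : x.2 ∈ Z
      · have hxP : x ∈ P := ⟨⟨⟨h1, h2⟩, hne⟩, hx⟩
        obtain ⟨i, hi, hxi⟩ := Set.mem_iUnion₂.mp (hc1 hxP)
        refine Set.mem_iUnion₂.mpr ⟨i, by omega, ?_⟩
        dsimp only
        split_ifs <;> first | exact hxi | (exfalso; omega)
      · refine Set.mem_iUnion₂.mpr ⟨nor P + nor Q, by omega, ?_⟩
        dsimp only
        split_ifs <;> first | exact ⟨h1, hx2, h2⟩ | (exfalso; omega)
      · refine Set.mem_iUnion₂.mpr ⟨nor P + nor Q + 1, by omega, ?_⟩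
        dsimp only
        split_ifs <;> first | exact ⟨⟨hx1, h1⟩, h2⟩ | (exfalso; omega)
      · have hxQ : x ∈ Q := ⟨⟨⟨⟨hx1, h1⟩, ⟨hx2, h2⟩⟩, hne⟩, hx⟩
        obtain ⟨i, hi, hxi⟩ := Set.mem_iUnion₂.mp (hc2 hxQ)
        refine Set.mem_iUnion₂.mpr ⟨nor P + i, by omega, ?_⟩
        dsimp only
        split_ifs <;> first | (simpa using hxi) | (exfalso; omega)
  omega
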